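/- arXiv:1906.03323 — 2 statements merged into one kernel-verified Lean document; each statement's English description precedes it below -/
import Mathlib

section
/- Let $\beta^*$ maximize $\sum_{n=1}^N \log(1 + \beta(w_n-1))$ subject to $1 + \beta(w-1) \ge 0$ for all $w \in [w_{\min}, w_{\max}]$, where each $w_n \in [w_{\min}, w_{\max}]$. Then $|\beta^*| \sum_{n=1}^N \frac{(w_n-1)^2}{1 + \beta^*(w_n-1)} \le \left| \sum_{n=1}^N (w_n - 1) \right|$. -/
open Finset

/-!
With `aₙ = wₙ - 1` and `F(β) = ∑ log (1 + β aₙ)`, the feasible set is an interval containing `0`,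
so `β*` maximizes `F` on the segment `[β*, 0]` and the one-sided first-order condition gives
`β* F'(β*) ≥ 0`, where `F'(β) = ∑ aₙ / (1 + β aₙ)`. Writing `Q = ∑ aₙ² / (1 + β* aₙ)`, the identity
`∑ aₙ = F'(β*) + β* Q` then yields `β*² Q ≤ β* ∑ aₙ ≤ |β*| |∑ aₙ|`.
-/

lemma one_add_mul_nonneg_of_mem_segment {β γ a : ℝ} (hγ : γ ∈ segment ℝ 0 β)
    (hβ : 0 ≤ 1 + β * a) : 0 ≤ 1 + γ * a := by
  obtain ⟨s, t, hs, ht, hst, rfl⟩ := hγ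
  rw [smul_zero, zero_add, smul_eq_mul]
  nlinarith [mul_nonneg ht hβ]

lemma HasDerivAt.mul_sub_nonpos_of_isMaxOn_segment {f : ℝ → ℝ} {f' x y : ℝ}
    (hf : HasDerivAt f f' x) (hmax : IsMaxOn f (segment ℝ x y) x) : f' * (y - x) ≤ 0 := by
  have hcone : y - x ∈ posTangentConeAt (segment ℝ x y) x :=
    sub_mem_posTangentConeAt_of_segment_subset le_rfl
  simpa [mul_comm] using hmax.localize.hasFDerivWithinAt_nonpos hf.hasFDerivAt.hasFDerivWithinAt hcone

lemma hasDerivAt_sum_log_one_add_mul {ι : Type*} [Fintype ι] {a : ι → ℝ} {β : ℝ}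
    (hpos : ∀ n, 0 < 1 + β * a n) :
    HasDerivAt (fun β ↦ ∑ n, Real.log (1 + β * a n)) (∑ n, a n / (1 + β * a n)) β := by
  refine HasDerivAt.fun_sum fun n _ ↦ ?_
  have hlin : HasDerivAt (fun β ↦ 1 + β * a n) (a n) β := by
    simpa using ((hasDerivAt_id β).mul_const (a n)).const_add 1
  simpa using hlin.log (hpos n).ne'

lemma sum_eq_sum_div_add_mul_sum_sq_div {ι : Type*} (s : Finset ι) {a : ι → ℝ} {β : ℝ}
    (hne : ∀ n ∈ s, 1 + β * a n ≠ 0) :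
    ∑ n ∈ s, a n = ∑ n ∈ s, a n / (1 + β * a n) + β * ∑ n ∈ s, a n ^ 2 / (1 + β * a n) := by
  rw [mul_sum, ← sum_add_distrib]
  refine sum_congr rfl fun n hn ↦ ?_
  rw [mul_div_assoc', ← add_div, eq_div_iff (hne n hn)]
  ring

lemma abs_mul_le_abs_add_mul {β g Q : ℝ} (h : 0 ≤ β * g) : |β| * Q ≤ |g + β * Q| := by
  rcases eq_or_ne β 0 with rfl | hβ
  · simp
  refine le_of_mul_le_mul_left ?_ (abs_pos.mpr hβ)
  calc |β| * (|β| * Q) = β * β * Q := by rw [← mul_assoc, abs_mul_abs_self]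
    _ ≤ β * (g + β * Q) := by nlinarith
    _ ≤ |β * (g + β * Q)| := le_abs_self _
    _ = |β| * |g + β * Q| := abs_mul _ _

theorem betastar_magnitude_bound_general
    (N : ℕ) (w : Fin N → ℝ) (wmin wmax : ℝ)
    (βs : ℝ)
    (hfeas : ∀ v ∈ Set.Icc wmin wmax, 0 ≤ 1 + βs * (v - 1))
    (hpos : ∀ n, 0 < 1 + βs * (w n - 1))
    (hmax : ∀ β : ℝ, (∀ v ∈ Set.Icc wmin wmax, 0 ≤ 1 + β * (v - 1)) →
      ∑ n, Real.log (1 + β * (w n - 1)) ≤ ∑ n, Real.log (1 + βs * (w n - 1))) :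
    |βs| * ∑ n, (w n - 1) ^ 2 / (1 + βs * (w n - 1)) ≤ |∑ n, (w n - 1)| := by
  have hmaxOn : IsMaxOn (fun β ↦ ∑ n, Real.log (1 + β * (w n - 1))) (segment ℝ βs 0) βs :=
    fun β hβ ↦ hmax β fun v hv ↦
      one_add_mul_nonneg_of_mem_segment (segment_symm ℝ βs 0 ▸ hβ) (hfeas v hv)
  have hstationary := (hasDerivAt_sum_log_one_add_mul hpos).mul_sub_nonpos_of_isMaxOn_segment hmaxOn
  rw [sum_eq_sum_div_add_mul_sum_sq_div _ fun n _ ↦ (hpos n).ne']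
  exact abs_mul_le_abs_add_mul (by linarith)

/-- Magnitude bound on the maximizer `β*` of the dual likelihood. -/
theorem betastar_magnitude_bound
    (N : ℕ) (w : Fin N → ℝ) (wmin wmax : ℝ)
    (hwmin : 0 ≤ wmin) (h1 : wmin ≤ 1) (h2 : 1 ≤ wmax)
    (hw : ∀ n, w n ∈ Set.Icc wmin wmax)
    (βs : ℝ)
    (hfeas : ∀ v ∈ Set.Icc wmin wmax, 0 ≤ 1 + βs * (v - 1))
    (hpos : ∀ n, 0 < 1 + βs * (w n - 1))
    (hmax : ∀ β : ℝ, (∀ v ∈ Set.Icc wmin wmax, 0 ≤ 1 + β * (v - 1)) →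
      ∑ n, Real.log (1 + β * (w n - 1)) ≤ ∑ n, Real.log (1 + βs * (w n - 1))) :
    |βs| * ∑ n, (w n - 1) ^ 2 / (1 + βs * (w n - 1)) ≤ |∑ n, (w n - 1)| :=
  betastar_magnitude_bound_general N w wmin wmax βs hfeas hpos hmax
end

section
/- Let $\{M_n\}$ be a martingale with $M_0 = 0$, increments $\Delta M_n = w_n - 1$ where $0 \le w_n \le w_{\max}$ almost surely and $w_{\max} \ge 1$, adapted to filtration $\{\mathcal{F}_n\}$. Suppose almost surely $\sum_{n\le N} \mathbb{E}[(w_n-1)^2 \mid \mathcal{F}_{n-1}] \le N y$. Then $\mathbb{E}\left[\frac{1}{N}\left|\sum_{n \le N}(w_n - 1)\right|\right] \le 5\sqrt{y/N} + 8 w_{\max}/N$. -/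
/-!
Martingale increments are orthogonal in `L²`, so the second moment of `S = ∑ₙ (wₙ - 1)` is
`∑ₙ 𝔼[(wₙ - 1)²] = 𝔼[∑ₙ 𝔼[(wₙ - 1)² | ℱₙ]] ≤ N y`, and `𝔼|S| ≤ √𝔼[S²] ≤ √(N y)`.
-/

open MeasureTheory ProbabilityTheory Finset

section

variable {Ω : Type*} {mΩ : MeasurableSpace Ω} {μ : Measure Ω}

lemma sq_integral_abs_le_integral_sq [IsProbabilityMeasure μ] {f : Ω → ℝ} (hf : MemLp f 2 μ) :
    (∫ ω, |f ω| ∂μ) ^ 2 ≤ ∫ ω, f ω ^ 2 ∂μ := by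
  have h := variance_eq_sub hf.abs
  simp only [Pi.pow_apply, Pi.abs_apply, sq_abs] at h
  linarith [variance_nonneg |f| μ]

lemma integral_mul_eq_zero_of_condExp_eq_zero {m : MeasurableSpace Ω} (hm : m ≤ mΩ)
    [SigmaFinite (μ.trim hm)] {f g : Ω → ℝ} (hf : StronglyMeasurable[m] f)
    (hfg : Integrable (f * g) μ) (hg : Integrable g μ) (hg0 : μ[g | m] =ᵐ[μ] 0) :
    ∫ ω, f ω * g ω ∂μ = 0 :=
  calc ∫ ω, f ω * g ω ∂μ = ∫ ω, μ[f * g | m] ω ∂μ := (integral_condExp hm).symm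
    _ = ∫ ω, (f * μ[g | m]) ω ∂μ :=
        integral_congr_ae (condExp_mul_of_stronglyMeasurable_left hf hfg hg)
    _ = 0 := integral_eq_zero_of_ae (by filter_upwards [hg0] with ω h; simp [h])

lemma integral_sq_sum_range_eq_sum_integral_sq [IsFiniteMeasure μ] {ℱ : Filtration ℕ mΩ}
    {X : ℕ → Ω → ℝ} (hX : ∀ n, StronglyMeasurable[ℱ (n + 1)] (X n))
    (hL2 : ∀ n, MemLp (X n) 2 μ) (hX0 : ∀ n, μ[X n | ℱ n] =ᵐ[μ] 0) (N : ℕ) :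
    ∫ ω, (∑ n ∈ range N, X n ω) ^ 2 ∂μ = ∑ n ∈ range N, ∫ ω, X n ω ^ 2 ∂μ := by
  induction N with
  | zero => simp
  | succ N ih =>
    set S : Ω → ℝ := fun ω => ∑ n ∈ range N, X n ω
    have hS : StronglyMeasurable[ℱ N] S := Finset.stronglyMeasurable_fun_sum _
      fun n hn => (hX n).mono (ℱ.mono (mem_range.mp hn))
    have hSL2 : MemLp S 2 μ := memLp_finsetSum _ fun n _ => hL2 n
    have hSX : Integrable (S * X N) μ := hSL2.integrable_mul (hL2 N)
    have hcross : ∫ ω, S ω * X N ω ∂μ = 0 :=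
      integral_mul_eq_zero_of_condExp_eq_zero (ℱ.le N) hS hSX
        ((hL2 N).integrable one_le_two) (hX0 N)
    have hsplit : ∀ ω, (∑ n ∈ range (N + 1), X n ω) ^ 2
        = S ω ^ 2 + 2 * (S ω * X N ω) + X N ω ^ 2 := fun ω => by
      rw [sum_range_succ]; ring
    have hSsq : Integrable (fun ω => S ω ^ 2) μ := hSL2.integrable_sq
    have h2SX : Integrable (fun ω => 2 * (S ω * X N ω)) μ := hSX.const_mul 2
    simp_rw [hsplit]
    rw [integral_add (hSsq.fun_add h2SX) (hL2 N).integrable_sq, integral_add hSsq h2SX,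
      integral_const_mul, hcross, ih, sum_range_succ]
    ring

lemma sum_integral_le_of_ae_sum_condExp_le [IsProbabilityMeasure μ] {ι : Type*} [Preorder ι]
    (ℱ : Filtration ι mΩ) (f : ι → Ω → ℝ) (s : Finset ι) {c : ℝ}
    (h : ∀ᵐ ω ∂μ, ∑ i ∈ s, μ[f i | ℱ i] ω ≤ c) : ∑ i ∈ s, ∫ ω, f i ω ∂μ ≤ c :=
  calc ∑ i ∈ s, ∫ ω, f i ω ∂μ = ∫ ω, ∑ i ∈ s, μ[f i | ℱ i] ω ∂μ := by
        rw [integral_finsetSum _ fun i _ => integrable_condExp]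
        exact sum_congr rfl fun i _ => (integral_condExp (ℱ.le i)).symm
    _ ≤ ∫ _, c ∂μ := integral_mono_ae (integrable_finsetSum _ fun i _ => integrable_condExp)
        (integrable_const c) h
    _ = c := by simp

lemma div_le_sqrt_div_of_sq_le_mul {a b c : ℝ} (hb : 0 ≤ b) (h : a ^ 2 ≤ b * c) :
    a / b ≤ √(c / b) := by
  refine (le_abs_self _).trans (Real.abs_le_sqrt ?_)
  rcases hb.eq_or_lt with rfl | hb
  · simp
  · rw [div_pow, div_le_div_iff₀ (by positivity) hb]
    nlinarith

end

theorem martingale_mean_abs_deviation_general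
    {Ω : Type*} {mΩ : MeasurableSpace Ω} (μ : Measure Ω) [IsProbabilityMeasure μ]
    (ℱ : Filtration ℕ mΩ) (w : ℕ → Ω → ℝ) (N : ℕ)
    (wmax y : ℝ)
    (hadapt : ∀ n, StronglyMeasurable[ℱ (n + 1)] (w n))
    (hbd : ∀ n, ∀ᵐ ω ∂μ, 0 ≤ w n ω ∧ w n ω ≤ wmax)
    (hmart : ∀ n, MeasureTheory.condExp (ℱ n) μ (w n) =ᵐ[μ] fun _ => (1 : ℝ))
    (hvar : ∀ᵐ ω ∂μ,
      ∑ n ∈ Finset.range N, MeasureTheory.condExp (ℱ n) μ (fun ω' => (w n ω' - 1) ^ 2) ω ≤ N * y) :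
    ∫ ω, (1 / (N : ℝ)) * |∑ n ∈ Finset.range N, (w n ω - 1)| ∂μ ≤
      5 * Real.sqrt (y / N) + 8 * wmax / N := by
  set X : ℕ → Ω → ℝ := fun n ω => w n ω - 1
  have hX : ∀ n, StronglyMeasurable[ℱ (n + 1)] (X n) :=
    fun n => (hadapt n).sub stronglyMeasurable_const
  have hwL2 : ∀ n, MemLp (w n) 2 μ := fun n =>
    .of_bound ((hadapt n).mono (ℱ.le _)).aestronglyMeasurable wmax <| (hbd n).mono
      fun ω h => by rw [Real.norm_eq_abs, abs_of_nonneg h.1]; exact h.2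
  have hL2 : ∀ n, MemLp (X n) 2 μ := fun n => (hwL2 n).sub (memLp_const 1)
  have hX0 : ∀ n, μ[X n | ℱ n] =ᵐ[μ] 0 := fun n => by
    change μ[w n - fun _ => 1 | ℱ n] =ᵐ[μ] 0
    filter_upwards [condExp_sub ((hwL2 n).integrable one_le_two) (integrable_const 1) (ℱ n),
      hmart n] with ω hsub hw
    rw [hsub, Pi.sub_apply, hw, condExp_const (ℱ.le n)]
    simp
  have hS2 : ∫ ω, (∑ n ∈ range N, X n ω) ^ 2 ∂μ ≤ N * y := by
    rw [integral_sq_sum_range_eq_sum_integral_sq hX hL2 hX0]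
    exact sum_integral_le_of_ae_sum_condExp_le ℱ _ _ hvar
  have hS1 : (∫ ω, |∑ n ∈ range N, X n ω| ∂μ) ^ 2 ≤ N * y :=
    (sq_integral_abs_le_integral_sq (memLp_finsetSum _ fun n _ => hL2 n)).trans hS2
  have hwmax : 0 ≤ wmax := by
    obtain ⟨ω, h⟩ := (hbd 0).exists
    exact h.1.trans h.2
  rw [integral_const_mul, one_div_mul_eq_div]
  calc _ ≤ √(y / N) := div_le_sqrt_div_of_sq_le_mul N.cast_nonneg hS1
    _ ≤ _ := by linarith [Real.sqrt_nonneg (y / N), show 0 ≤ 8 * wmax / N by positivity]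

/-- Expected absolute deviation bound for a sum of martingale increments
`wₙ - 1` with `0 ≤ wₙ ≤ w_max` and predictable variance at most `N y`. -/
theorem martingale_mean_abs_deviation
    {Ω : Type*} {mΩ : MeasurableSpace Ω} (μ : Measure Ω) [IsProbabilityMeasure μ]
    (ℱ : Filtration ℕ mΩ) (w : ℕ → Ω → ℝ) (N : ℕ) (hN : 0 < N)
    (wmax y : ℝ) (hwmax : 1 ≤ wmax) (hy : 0 ≤ y)
    (hadapt : ∀ n, StronglyMeasurable[ℱ (n + 1)] (w n))
    (hbd : ∀ n, ∀ᵐ ω ∂μ, 0 ≤ w n ω ∧ w n ω ≤ wmax)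
    (hmart : ∀ n, MeasureTheory.condExp (ℱ n) μ (w n) =ᵐ[μ] fun _ => (1 : ℝ))
    (hvar : ∀ᵐ ω ∂μ,
      ∑ n ∈ Finset.range N, MeasureTheory.condExp (ℱ n) μ (fun ω' => (w n ω' - 1) ^ 2) ω ≤ N * y) :
    ∫ ω, (1 / (N : ℝ)) * |∑ n ∈ Finset.range N, (w n ω - 1)| ∂μ ≤
      5 * Real.sqrt (y / N) + 8 * wmax / N :=
  martingale_mean_abs_deviation_general μ ℱ w N wmax y hadapt hbd hmart hvar
end
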